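/- Define p_0 = 1, q_0 = 2, and for k ≥ 1, p_k = 2·q_{k−1} and q_k = 3·q_{k−1} − 1. Let T = ⋃_{k ≥ 0} {p_k, p_k+1, ..., q_k}. Then T is 3-free: there exists a bijective enumeration of T that contains no 3-term arithmetic progression as a subsequence. -/

import Mathlib

/-- `f : ℕ → ℕ` is a (bijective) enumeration of the set `S`. -/
def IsPermOf (f : ℕ → ℕ) (S : Set ℕ) : Prop :=
  Function.Injective f ∧ Set.range f = S

/-- A set `S` of naturals is 3-free if some enumeration of `S` contains no
3-term arithmetic progression (with nonzero, possibly negative, common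
difference) as a subsequence. -/
def ThreeFree (S : Set ℕ) : Prop :=
  ∃ f : ℕ → ℕ, IsPermOf f S ∧
    ¬ ∃ i j k : ℕ, i < j ∧ j < k ∧
      ((f j : ℤ) - (f i : ℤ) = (f k : ℤ) - (f j : ℤ)) ∧ f i ≠ f j

/-- `q 0 = 2` and `q (k+1) = 3 * q k - 1`. -/
def q : ℕ → ℕ
  | 0 => 2
  | k + 1 => 3 * q k - 1

/-- `p 0 = 1` and `p (k+1) = 2 * q k`. -/
def p : ℕ → ℕ
  | 0 => 1
  | k + 1 => 2 * q k

/-! Every interval of naturals has an ordering without 3-term progressions: list the odd numbers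
first and the even numbers after, each half ordered recursively, so that no progression can
straddle the two halves (its outer terms would have different parities, so an odd sum).
Now list the blocks `[p k, q k]` in increasing order, each one ordered in this way. Since
`p (k + 1) = 2 * q k` and `2 * p (k + 1) - q (k + 1) = q k + 1`, a progression with two terms
in earlier blocks has its third term below `p (k + 1)`, and one with two terms in block `k + 1`
has its remaining term above `q k`; so no progression meets two blocks. -/

/-- Constant progressions are forbidden too, which costs nothing for lists without repetitions. -/
def SublistAPFree (l : List ℕ) : Prop :=
  ∀ ⦃a b c : ℕ⦄, [a, b, c].Sublist l → a + c ≠ 2 * b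

namespace SublistAPFree

lemma of_length_lt {l : List ℕ} (hl : l.length < 3) : SublistAPFree l :=
  fun _ _ _ h => absurd h.length_le (by simp; omega)

lemma map {l : List ℕ} (hl : SublistAPFree l) {f : ℕ → ℕ}
    (hf : ∀ a b c, f a + f c = 2 * f b → a + c = 2 * b) : SublistAPFree (l.map f) := by
  intro a b c h
  obtain ⟨l', hl', hmap⟩ := List.sublist_map_iff.mp h
  match l', hmap with
  | [a', b', c'], hmap =>
    simp only [List.map_cons, List.map_nil, List.cons.injEq, and_true] at hmap
    obtain ⟨rfl, rfl, rfl⟩ := hmap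
    exact fun hAP => hl hl' (hf _ _ _ hAP)

lemma append {l₁ l₂ : List ℕ} (h₁ : SublistAPFree l₁) (h₂ : SublistAPFree l₂)
    (hleft : ∀ a ∈ l₁, ∀ b ∈ l₁, ∀ c ∈ l₂, a + c ≠ 2 * b)
    (hright : ∀ a ∈ l₁, ∀ b ∈ l₂, ∀ c ∈ l₂, a + c ≠ 2 * b) :
    SublistAPFree (l₁ ++ l₂) := by
  intro a b c h
  obtain ⟨u, v, huv, hu, hv⟩ := List.sublist_append_iff.mp h
  rcases u with _ | ⟨x, _ | ⟨y, _ | ⟨z, _ | ⟨w, u⟩⟩⟩⟩ <;>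
    simp only [List.cons_append, List.nil_append, List.cons.injEq, List.cons_ne_nil,
      List.nil_eq, and_false] at huv
  · exact h₂ (huv ▸ hv)
  · obtain ⟨rfl, rfl⟩ := huv
    exact hright a (hu.subset (by simp)) b (hv.subset (by simp)) c (hv.subset (by simp))
  · obtain ⟨rfl, rfl, rfl⟩ := huv
    exact hleft a (hu.subset (by simp)) b (hu.subset (by simp)) c (hv.subset (by simp))
  · obtain ⟨rfl, rfl, rfl, -⟩ := huv
    exact h₁ hu

end SublistAPFree

theorem exists_sublistAPFree_perm_range (n : ℕ) :
    ∃ l : List ℕ, l.Perm (List.range n) ∧ SublistAPFree l := by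
  induction n using Nat.strong_induction_on with
  | _ n ih =>
  rcases Nat.lt_or_ge n 2 with hn | hn
  · exact ⟨List.range n, .refl _, .of_length_lt (by simp; omega)⟩
  obtain ⟨l₁, hperm₁, hap₁⟩ := ih (n / 2) (by omega)
  obtain ⟨l₂, hperm₂, hap₂⟩ := ih ((n + 1) / 2) (by omega)
  have hmem₁ : ∀ x, x ∈ l₁ ↔ x < n / 2 := by simp [hperm₁.mem_iff]
  have hmem₂ : ∀ x, x ∈ l₂ ↔ x < (n + 1) / 2 := by simp [hperm₂.mem_iff]
  refine ⟨l₁.map (2 * · + 1) ++ l₂.map (2 * ·), ?_, ?_⟩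
  · have hnodup₁ := hperm₁.nodup_iff.mpr List.nodup_range
    have hnodup₂ := hperm₂.nodup_iff.mpr List.nodup_range
    rw [List.perm_ext_iff_of_nodup _ List.nodup_range]
    · intro x
      simp only [List.mem_append, List.mem_map, hmem₁, hmem₂, List.mem_range]
      refine ⟨by rintro (⟨y, hy, rfl⟩ | ⟨y, hy, rfl⟩) <;> omega, fun hx => ?_⟩
      rcases Nat.even_or_odd' x with ⟨y, rfl | rfl⟩
      · exact .inr ⟨y, by omega, rfl⟩
      · exact .inl ⟨y, by omega, rfl⟩
    · refine List.nodup_append.mpr ⟨hnodup₁.map fun _ _ _ => by omega,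
        hnodup₂.map fun _ _ _ => by omega, ?_⟩
      simp only [List.mem_map]
      rintro _ ⟨y, -, rfl⟩ _ ⟨z, -, rfl⟩
      omega
  · refine (hap₁.map fun _ _ _ _ => by omega).append (hap₂.map fun _ _ _ _ => by omega) ?_ ?_
    all_goals
      simp only [List.mem_map]
      rintro _ ⟨x, -, rfl⟩ _ ⟨y, -, rfl⟩ _ ⟨z, -, rfl⟩
      omega

section PrefixChain

variable {α : Type*} {g : ℕ → List α}

lemma isPrefix_of_le (hg : ∀ k, g k <+: g (k + 1)) {k m : ℕ} (h : k ≤ m) : g k <+: g m := by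
  induction h with
  | refl => exact List.prefix_refl _
  | step _ ih => exact ih.trans (hg _)

variable [Inhabited α]

/-- For a chain of prefixes with `n < (g n).length`, the default is never used and the `n`-th
term is the `n`-th entry of every `g k` long enough to have one. -/
def prefixLimit (g : ℕ → List α) (n : ℕ) : α := (g n).getD n default

lemma prefixLimit_eq_getElem (hg : ∀ k, g k <+: g (k + 1)) (hlen : ∀ k, k < (g k).length)
    {n m : ℕ} (h : n < (g m).length) : prefixLimit g n = (g m)[n] := by
  have hmax : ∀ k (hk : n < (g k).length), k ≤ max n m →
      (g k)[n] = (g (max n m))[n]'(by have := hlen (max n m); omega) :=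
    fun k hk hkm => (isPrefix_of_le hg hkm).getElem hk
  rw [prefixLimit, List.getD_eq_getElem _ _ (hlen n), hmax n (hlen n) (le_max_left _ _),
    hmax m h (le_max_right _ _)]

lemma injective_prefixLimit (hg : ∀ k, g k <+: g (k + 1)) (hlen : ∀ k, k < (g k).length)
    (hnodup : ∀ k, (g k).Nodup) : Function.Injective (prefixLimit g) := by
  intro i j hij
  have hi : i < (g (max i j)).length := by have := hlen (max i j); omega
  have hj : j < (g (max i j)).length := by have := hlen (max i j); omega
  rw [prefixLimit_eq_getElem hg hlen hi, prefixLimit_eq_getElem hg hlen hj] at hij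
  exact (hnodup _).getElem_inj_iff.mp hij

lemma range_prefixLimit (hg : ∀ k, g k <+: g (k + 1)) (hlen : ∀ k, k < (g k).length) :
    Set.range (prefixLimit g) = {x | ∃ k, x ∈ g k} := by
  ext x
  constructor
  · rintro ⟨n, rfl⟩
    exact ⟨n, prefixLimit_eq_getElem hg hlen (hlen n) ▸ List.getElem_mem _⟩
  · rintro ⟨k, hx⟩
    obtain ⟨i, hi, rfl⟩ := List.getElem_of_mem hx
    exact ⟨i, prefixLimit_eq_getElem hg hlen hi⟩

lemma triple_sublist_prefixLimit (hg : ∀ k, g k <+: g (k + 1)) (hlen : ∀ k, k < (g k).length)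
    {i j k : ℕ} (hij : i < j) (hjk : j < k) :
    [prefixLimit g i, prefixLimit g j, prefixLimit g k].Sublist (g k) := by
  have hk := hlen k
  rw [prefixLimit_eq_getElem hg hlen (show i < (g k).length by omega),
    prefixLimit_eq_getElem hg hlen (show j < (g k).length by omega),
    prefixLimit_eq_getElem hg hlen hk]
  simpa using List.map_getElem_sublist (l := g k)
    (is := [⟨i, by omega⟩, ⟨j, by omega⟩, ⟨k, hk⟩]) (by simp; omega)

end PrefixChain

lemma two_le_q (k : ℕ) : 2 ≤ q k := by
  induction k with
  | zero => simp [q]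
  | succ k ih => simp only [q]; omega

lemma one_le_p_le_q : ∀ k, 1 ≤ p k ∧ p k ≤ q k
  | 0 => by simp [p, q]
  | k + 1 => by have := two_le_q k; simp only [p, q]; omega

lemma q_mono : Monotone q :=
  monotone_nat_of_le_succ fun k => by have := two_le_q k; simp only [q]; omega

noncomputable def block (k : ℕ) : List ℕ :=
  (exists_sublistAPFree_perm_range (q k + 1 - p k)).choose.map (· + p k)

lemma mem_block {k x : ℕ} : x ∈ block k ↔ p k ≤ x ∧ x ≤ q k := by
  have hperm := (exists_sublistAPFree_perm_range (q k + 1 - p k)).choose_spec.1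
  have := (one_le_p_le_q k).2
  simp only [block, List.mem_map, hperm.mem_iff, List.mem_range]
  exact ⟨by rintro ⟨y, hy, rfl⟩; omega, fun hx => ⟨x - p k, by omega, by omega⟩⟩

lemma nodup_block (k : ℕ) : (block k).Nodup :=
  ((exists_sublistAPFree_perm_range _).choose_spec.1.nodup_iff.mpr List.nodup_range).map
    (add_left_injective _)

lemma sublistAPFree_block (k : ℕ) : SublistAPFree (block k) :=
  (exists_sublistAPFree_perm_range _).choose_spec.2.map fun _ _ _ _ => by omega

lemma block_ne_nil (k : ℕ) : block k ≠ [] :=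
  List.ne_nil_of_mem (mem_block.mpr ⟨le_rfl, (one_le_p_le_q k).2⟩)

noncomputable def blocksUpTo (k : ℕ) : List ℕ := (List.range (k + 1)).flatMap block

lemma blocksUpTo_succ (k : ℕ) : blocksUpTo (k + 1) = blocksUpTo k ++ block (k + 1) := by
  simp [blocksUpTo, List.range_succ (n := k + 1), List.flatMap_append]

lemma mem_blocksUpTo {k x : ℕ} : x ∈ blocksUpTo k ↔ ∃ m ≤ k, x ∈ block m := by
  simp [blocksUpTo]

lemma lt_length_blocksUpTo (k : ℕ) : k < (blocksUpTo k).length := by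
  induction k with
  | zero => simpa [blocksUpTo, List.length_pos_iff] using block_ne_nil 0
  | succ k ih =>
    have := List.length_pos_iff.mpr (block_ne_nil (k + 1))
    rw [blocksUpTo_succ, List.length_append]
    omega

lemma bounds_of_mem_blocksUpTo {k x : ℕ} (hx : x ∈ blocksUpTo k) : 1 ≤ x ∧ x ≤ q k := by
  obtain ⟨m, hm, hx⟩ := mem_blocksUpTo.mp hx
  have := one_le_p_le_q m
  have := mem_block.mp hx
  have := q_mono hm
  omega

lemma nodup_blocksUpTo (k : ℕ) : (blocksUpTo k).Nodup := by
  induction k with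
  | zero => simpa [blocksUpTo] using nodup_block 0
  | succ k ih =>
    rw [blocksUpTo_succ, List.nodup_append]
    refine ⟨ih, nodup_block _, fun x hx y hy => ?_⟩
    have := (bounds_of_mem_blocksUpTo hx).2
    have := (mem_block.mp hy).1
    have := two_le_q k
    simp only [p] at *
    omega

lemma sublistAPFree_blocksUpTo (k : ℕ) : SublistAPFree (blocksUpTo k) := by
  induction k with
  | zero => simpa [blocksUpTo] using sublistAPFree_block 0
  | succ k ih =>
    rw [blocksUpTo_succ]
    have := two_le_q k
    refine ih.append (sublistAPFree_block _) (fun a ha b hb c hc => ?_) (fun a ha b hb c hc => ?_)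
    · have := bounds_of_mem_blocksUpTo ha
      have := bounds_of_mem_blocksUpTo hb
      have := mem_block.mp hc
      simp only [p, q] at *
      omega
    · have := bounds_of_mem_blocksUpTo ha
      have := mem_block.mp hb
      have := mem_block.mp hc
      simp only [p, q] at *
      omega

/-- The set `T = ⋃ k, {p k, p k + 1, ..., q k}` is 3-free. -/
theorem T_threeFree : ThreeFree (⋃ k : ℕ, Set.Icc (p k) (q k)) := by
  have hprefix (k : ℕ) : blocksUpTo k <+: blocksUpTo (k + 1) :=
    blocksUpTo_succ k ▸ List.prefix_append _ _
  refine ⟨prefixLimit blocksUpTo,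
    ⟨injective_prefixLimit hprefix lt_length_blocksUpTo nodup_blocksUpTo, ?_⟩, ?_⟩
  · rw [range_prefixLimit hprefix lt_length_blocksUpTo]
    ext x
    simp only [Set.mem_ofPred_eq, mem_blocksUpTo, Set.mem_iUnion, Set.mem_Icc, mem_block]
    exact ⟨fun ⟨_, m, _, hm⟩ => ⟨m, hm⟩, fun ⟨m, hm⟩ => ⟨m, m, le_rfl, hm⟩⟩
  · rintro ⟨i, j, k, hij, hjk, hAP, -⟩
    exact sublistAPFree_blocksUpTo k
      (triple_sublist_prefixLimit hprefix lt_length_blocksUpTo hij hjk) (by omega)
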